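/- arXiv:2204.06444 — 7 statements merged into one kernel-verified Lean document; each statement's English description precedes it below -/
import Mathlib

section
/- Let n ≥ 1, let N ⊆ C be a convex cone (closed under addition and under multiplication by positive real scalars), and let f : ℝ × ℝⁿ → ℝ be a linear map. Then the submaximality cone SC(f) := {x ∈ N : f(x) < √(q(x))} is again a convex cone (closed under addition and under multiplication by positive real scalars), and SC(f) is an open subset of N in the subspace topology of N. -/
lemma sqrt_superadd (x0 y0 a b : ℝ) (hx0 : 0 ≤ x0) (hy0 : 0 ≤ y0)
    (ha : 0 ≤ a) (hb : 0 ≤ b) (hA : a ^ 2 ≤ x0 ^ 2) (hB : b ^ 2 ≤ y0 ^ 2) :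
    Real.sqrt (x0 ^ 2 - a ^ 2) + Real.sqrt (y0 ^ 2 - b ^ 2) ≤
      Real.sqrt ((x0 + y0) ^ 2 - (a + b) ^ 2) := by
  have hax : a ≤ x0 := by nlinarith
  have hby : b ≤ y0 := by nlinarith
  have hcross : 0 ≤ x0 * y0 - a * b := by nlinarith
  have h1 : Real.sqrt (x0 ^ 2 - a ^ 2) * Real.sqrt (y0 ^ 2 - b ^ 2)
      ≤ x0 * y0 - a * b := by
    rw [← Real.sqrt_mul (by nlinarith)]
    calc Real.sqrt ((x0 ^ 2 - a ^ 2) * (y0 ^ 2 - b ^ 2))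
        ≤ Real.sqrt ((x0 * y0 - a * b) ^ 2) := by
          apply Real.sqrt_le_sqrt; nlinarith [sq_nonneg (x0 * b - a * y0)]
      _ = x0 * y0 - a * b := Real.sqrt_sq hcross
  have hs1 := Real.sqrt_nonneg (x0 ^ 2 - a ^ 2)
  have hs2 := Real.sqrt_nonneg (y0 ^ 2 - b ^ 2)
  have e1 : Real.sqrt (x0 ^ 2 - a ^ 2) ^ 2 = x0 ^ 2 - a ^ 2 :=
    Real.sq_sqrt (by nlinarith)
  have e2 : Real.sqrt (y0 ^ 2 - b ^ 2) ^ 2 = y0 ^ 2 - b ^ 2 :=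
    Real.sq_sqrt (by nlinarith)
  rw [show (x0 + y0) ^ 2 - (a + b) ^ 2 =
    (x0 ^ 2 - a ^ 2) + (y0 ^ 2 - b ^ 2) + 2 * (x0 * y0 - a * b) by ring]
  rw [← Real.sqrt_sq (add_nonneg hs1 hs2)]
  apply Real.sqrt_le_sqrt
  nlinarith

/-- The submaximality cone `SC(f) = {x ∈ N : f x < √(q x)}` of a linear function
`f` on a convex cone `N` contained in the forward cone `C` of the Lorentzian form
`q (x₀, x') = x₀² − ‖x'‖²` is again a convex cone, and is open in the subspace topology of `N`. -/
theorem submaximality_cone_open_convex (n : ℕ) (hn : 1 ≤ n)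
    (N : Set (ℝ × EuclideanSpace ℝ (Fin n)))
    (hNC : ∀ x ∈ N, 0 ≤ x.1 ∧ 0 ≤ x.1 ^ 2 - ‖x.2‖ ^ 2)
    (hNadd : ∀ x ∈ N, ∀ y ∈ N, x + y ∈ N)
    (hNsmul : ∀ x ∈ N, ∀ c : ℝ, 0 < c → c • x ∈ N)
    (f : (ℝ × EuclideanSpace ℝ (Fin n)) →ₗ[ℝ] ℝ)
    (SC : Set (ℝ × EuclideanSpace ℝ (Fin n)))
    (hSC : SC = {x | x ∈ N ∧ f x < Real.sqrt (x.1 ^ 2 - ‖x.2‖ ^ 2)}) :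
    (∀ x ∈ SC, ∀ y ∈ SC, x + y ∈ SC) ∧
    (∀ x ∈ SC, ∀ c : ℝ, 0 < c → c • x ∈ SC) ∧
    IsOpen {y : N | (y : ℝ × EuclideanSpace ℝ (Fin n)) ∈ SC} := by
  subst hSC
  refine ⟨?_, ?_, ?_⟩
  · rintro x ⟨hxN, hxf⟩ y ⟨hyN, hyf⟩
    refine ⟨hNadd x hxN y hyN, ?_⟩
    obtain ⟨hx0, hxq⟩ := hNC x hxN
    obtain ⟨hy0, hyq⟩ := hNC y hyN
    have key : Real.sqrt (x.1 ^ 2 - ‖x.2‖ ^ 2) + Real.sqrt (y.1 ^ 2 - ‖y.2‖ ^ 2) ≤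
        Real.sqrt ((x + y).1 ^ 2 - ‖(x + y).2‖ ^ 2) := by
      calc _ ≤ Real.sqrt ((x.1 + y.1) ^ 2 - (‖x.2‖ + ‖y.2‖) ^ 2) :=
            sqrt_superadd x.1 y.1 ‖x.2‖ ‖y.2‖ hx0 hy0 (norm_nonneg _) (norm_nonneg _)
              (by nlinarith) (by nlinarith)
        _ ≤ _ := by
            apply Real.sqrt_le_sqrt
            have hn2 : ‖(x + y).2‖ ≤ ‖x.2‖ + ‖y.2‖ := norm_add_le _ _
            have hn2' : 0 ≤ ‖(x + y).2‖ := norm_nonneg _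
            simp only [Prod.fst_add]
            nlinarith
    have : f (x + y) = f x + f y := map_add f x y
    linarith
  · rintro x ⟨hxN, hxf⟩ c hc
    refine ⟨hNsmul x hxN c hc, ?_⟩
    have h1 : (c • x).1 = c * x.1 := rfl
    have h2 : ‖(c • x).2‖ = |c| * ‖x.2‖ := by
      show ‖c • x.2‖ = _; rw [norm_smul]; simp
    rw [h1, h2, abs_of_pos hc,
      show (c * x.1) ^ 2 - (c * ‖x.2‖) ^ 2 = c ^ 2 * (x.1 ^ 2 - ‖x.2‖ ^ 2) by ring,
      Real.sqrt_mul (sq_nonneg c), Real.sqrt_sq hc.le]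
    have : f (c • x) = c * f x := map_smul f c x
    rw [this]
    exact mul_lt_mul_of_pos_left hxf hc
  · have hU : IsOpen {x : ℝ × EuclideanSpace ℝ (Fin n) |
        f x < Real.sqrt (x.1 ^ 2 - ‖x.2‖ ^ 2)} := by
      apply isOpen_lt f.continuous_of_finiteDimensional
      exact Real.continuous_sqrt.comp (by fun_prop)
    have : {y : N | (y : ℝ × EuclideanSpace ℝ (Fin n)) ∈
        {x | x ∈ N ∧ f x < Real.sqrt (x.1 ^ 2 - ‖x.2‖ ^ 2)}} =
        Subtype.val ⁻¹' {x : ℝ × EuclideanSpace ℝ (Fin n) |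
          f x < Real.sqrt (x.1 ^ 2 - ‖x.2‖ ^ 2)} := by
      ext y; simp [y.2]
    rw [this]
    exact hU.preimage continuous_subtype_val
end

section
/- Let ρ ≥ 1 and let S be a symmetric ρ×ρ integer matrix with det S ≠ 0. Let a, b ∈ ℤ^ρ be primitive vectors (the gcd of the entries of each is 1) such that d_a := aᵀSa and d_b := bᵀSb are positive integers that are not perfect squares. Let ℓ_a, k_a, ℓ_b, k_b be positive integers satisfying the Pell equations ℓ_a² − d_a·k_a² = 1 and ℓ_b² − d_b·k_b² = 1. If k_a·ℓ_b·(S a) = k_b·ℓ_a·(S b) as vectors in ℤ^ρ (i.e., the linear functionals v ↦ (k_a/ℓ_a)·vᵀSa and v ↦ (k_b/ℓ_b)·vᵀSb coincide), then a = b, and in particular d_a = d_b. -/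
open Matrix

theorem Finset.gcd_smul_of_gcd_eq_one {ι α : Type*} [CommMonoidWithZero α]
    [StrongNormalizedGCDMonoid α] {s : Finset ι} {f : ι → α} (hf : s.gcd f = 1) (c : α) :
    s.gcd (c • f) = normalize c := by
  rw [show c • f = fun i ↦ c * f i from rfl, Finset.gcd_mul_left, hf, mul_one]

theorem Int.eq_of_smul_eq_smul_of_primitive {ι : Type*} [Fintype ι] {a b : ι → ℤ} {c d : ℤ}
    (ha : Finset.univ.gcd a = 1) (hb : Finset.univ.gcd b = 1) (hc : 0 < c) (hd : 0 ≤ d)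
    (h : c • a = d • b) : a = b := by
  have hcd : c = d := by
    have := congrArg Finset.univ.gcd h
    rwa [Finset.gcd_smul_of_gcd_eq_one ha, Finset.gcd_smul_of_gcd_eq_one hb,
      Int.normalize_of_nonneg hc.le, Int.normalize_of_nonneg hd] at this
  subst hcd
  exact smul_right_injective _ hc.ne' h

theorem pell_bounds_distinct_general (ρ : ℕ)
    (S : Matrix (Fin ρ) (Fin ρ) ℤ) (hdet : S.det ≠ 0)
    (a b : Fin ρ → ℤ)
    (ha : Finset.univ.gcd a = 1) (hb : Finset.univ.gcd b = 1)
    (la ka lb kb : ℤ) (hla : 0 < la) (hka : 0 < ka) (hlb : 0 < lb) (hkb : 0 < kb)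
    (heq : (ka * lb) • (S *ᵥ a) = (kb * la) • (S *ᵥ b)) :
    a = b ∧ a ⬝ᵥ (S *ᵥ a) = b ⬝ᵥ (S *ᵥ b) := by
  have hmultiples : (ka * lb) • a = (kb * la) • b :=
    mulVec_injective_of_det_ne_zero hdet (by rwa [mulVec_smul, mulVec_smul])
  obtain rfl : a = b :=
    Int.eq_of_smul_eq_smul_of_primitive ha hb (by positivity) (by positivity) hmultiples
  exact ⟨rfl, rfl⟩

/-- Lemma 2.7 of the paper: Pell bounds of distinct primitive classes are distinct
linear functionals. If the Pell bounds of two primitive vectors `a`, `b` (with respect to a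
nondegenerate symmetric integer matrix `S`) coincide, then `a = b`. -/
theorem pell_bounds_distinct (ρ : ℕ) (hρ : 1 ≤ ρ)
    (S : Matrix (Fin ρ) (Fin ρ) ℤ) (hS : S.IsSymm) (hdet : S.det ≠ 0)
    (a b : Fin ρ → ℤ)
    (ha : Finset.univ.gcd a = 1) (hb : Finset.univ.gcd b = 1)
    (hda : 0 < a ⬝ᵥ (S *ᵥ a)) (hdb : 0 < b ⬝ᵥ (S *ᵥ b))
    (hsqa : ¬ IsSquare (a ⬝ᵥ (S *ᵥ a))) (hsqb : ¬ IsSquare (b ⬝ᵥ (S *ᵥ b)))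
    (la ka lb kb : ℤ) (hla : 0 < la) (hka : 0 < ka) (hlb : 0 < lb) (hkb : 0 < kb)
    (hpa : la ^ 2 - (a ⬝ᵥ (S *ᵥ a)) * ka ^ 2 = 1)
    (hpb : lb ^ 2 - (b ⬝ᵥ (S *ᵥ b)) * kb ^ 2 = 1)
    (heq : (ka * lb) • (S *ᵥ a) = (kb * la) • (S *ᵥ b)) :
    a = b ∧ a ⬝ᵥ (S *ᵥ a) = b ⬝ᵥ (S *ᵥ b) :=
  pell_bounds_distinct_general ρ S hdet a b ha hb la ka lb kb hla hka hlb hkb heq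
end

section
/- Let ρ ≥ 2 and let S be a symmetric ρ×ρ integer matrix with det S ≠ 0. Then there exists a vector x ∈ ℕ^ρ (all entries non-negative integers) such that xᵀSx is not the square of an integer. -/
/-!
Suppose every value `Q x = xᵀ S x` with `x ∈ ℕ^ρ` is a perfect square. For fixed `v, w ∈ ℕ^ρ` the
values `Q (t v + w) = Q v t² + 2 (vᵀ S w) t + Q w`, `t ∈ ℕ`, are then squares, and so is the leading
coefficient `Q v`. Such an integer quadratic has discriminant zero: otherwise (after completing the
square when `Q v ≠ 0`) it yields pairs of squares at a fixed nonzero distance with roots of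
unbounded size, whereas distinct squares satisfy `|x| ≤ |x² - y²|`. This is the equality case of
Cauchy–Schwarz, `(vᵀ S w)² = Q v Q w`. On basis vectors it gives `S k k • S = c cᵀ` with `c` the
`k`-th column of `S`, so for `ρ ≥ 2` either some `S k k ≠ 0` and `S` has rank one, or `S = 0`;
either way `det S = 0`.
-/

open Matrix

theorem Int.abs_le_abs_sq_sub_sq {x y : ℤ} (h : x ^ 2 ≠ y ^ 2) : |x| ≤ |x ^ 2 - y ^ 2| := by
  rw [← sq_abs x, ← sq_abs y] at h ⊢
  have hx := abs_nonneg x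
  have hy := abs_nonneg y
  generalize |x| = p, |y| = q at *
  rcases lt_or_gt_of_ne (fun hpq : p = q => h (by rw [hpq])) with hlt | hlt
  · rw [abs_of_neg (by nlinarith)]; nlinarith
  · rw [abs_of_pos (by nlinarith)]; nlinarith

theorem Int.eq_zero_of_forall_abs_le {a b M : ℤ} (h : ∀ t : ℕ, |a * t + b| ≤ M) : a = 0 := by
  by_contra ha
  have h0 : |b| ≤ M := by simpa using h 0
  set N := 2 * M.toNat + 1
  have hM : M ≤ M.toNat := Int.self_le_toNat M
  have : (N : ℤ) < N := calc
    (N : ℤ) ≤ |a * N| := by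
        rw [abs_mul, Nat.abs_cast]; exact le_mul_of_one_le_left (by positivity) (Int.one_le_abs ha)
    _ ≤ |a * N + b| + |b| := by simpa using abs_sub (a * N + b) b
    _ ≤ 2 * M := by linarith [h N]
    _ < N := by omega
  exact lt_irrefl _ this

theorem Int.eq_zero_of_forall_isSquare_mul_add {b c : ℤ} (h : ∀ t : ℕ, IsSquare (b * t + c)) :
    b = 0 := by
  choose r hr using h
  by_contra hb
  refine hb (Int.eq_zero_of_forall_abs_le (b := c) (M := b ^ 2) fun t => ?_)
  have hstep : r t ^ 2 - r (t + 1) ^ 2 = -b := by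
    rw [sq, sq, ← hr, ← hr]; push_cast; ring
  have hrt : |r t| ≤ |b| := by
    simpa [hstep] using Int.abs_le_abs_sq_sub_sq (x := r t) (y := r (t + 1)) (by omega)
  have hnn : 0 ≤ b * t + c := by rw [hr]; exact mul_self_nonneg _
  rw [abs_of_nonneg hnn, hr, ← sq_abs b, ← abs_mul_abs_self]
  exact mul_le_mul hrt hrt (abs_nonneg _) (abs_nonneg _) |>.trans_eq (sq _).symm

theorem Int.discrim_eq_zero_of_forall_isSquare {a b c : ℤ} (ha : IsSquare a)
    (h : ∀ t : ℕ, IsSquare (a * (t * t) + b * t + c)) : discrim a b c = 0 := by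
  rcases eq_or_ne a 0 with rfl | ha0
  · simp only [zero_mul, zero_add] at h
    simp [discrim, Int.eq_zero_of_forall_isSquare_mul_add h]
  obtain ⟨e, rfl⟩ := ha
  by_contra hD
  refine mul_ne_zero two_ne_zero ha0 <|
    Int.eq_zero_of_forall_abs_le (b := b) (M := |discrim (e * e) b c|) fun t => ?_
  obtain ⟨r, hr⟩ := h t
  have hsq : (2 * (e * e) * t + b) ^ 2 - (2 * e * r) ^ 2 = discrim (e * e) b c := by
    rw [discrim]; linear_combination 4 * e * e * hr
  have hne : (2 * (e * e) * t + b) ^ 2 ≠ (2 * e * r) ^ 2 := by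
    contrapose! hD
    rw [← hsq, hD, sub_self]
  simpa [hsq] using Int.abs_le_abs_sq_sub_sq hne

namespace Matrix

variable {n R : Type*} [Fintype n]

section CommRing

variable [CommRing R] {S : Matrix n n R}

theorem IsSymm.dotProduct_mulVec_comm (hS : S.IsSymm) (v w : n → R) :
    w ⬝ᵥ S *ᵥ v = v ⬝ᵥ S *ᵥ w := by
  rw [dotProduct_mulVec, ← mulVec_transpose, hS.eq, dotProduct_comm]

theorem IsSymm.dotProduct_mulVec_smul_add (hS : S.IsSymm) (t : R) (v w : n → R) :
    (t • v + w) ⬝ᵥ S *ᵥ (t • v + w) =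
      (v ⬝ᵥ S *ᵥ v) * (t * t) + 2 * (v ⬝ᵥ S *ᵥ w) * t + w ⬝ᵥ S *ᵥ w := by
  simp only [mulVec_add, mulVec_smul, dotProduct_add, add_dotProduct, dotProduct_smul,
    smul_dotProduct, smul_eq_mul, hS.dotProduct_mulVec_comm v w]
  ring

theorem IsSymm.diag_mul_eq_of_sq_dotProduct_mulVec [LinearOrder R] [IsStrictOrderedRing R]
    [DecidableEq n] (hS : S.IsSymm)
    (h : ∀ v w : n → R, 0 ≤ v → 0 ≤ w → (v ⬝ᵥ S *ᵥ w) ^ 2 = (v ⬝ᵥ S *ᵥ v) * (w ⬝ᵥ S *ᵥ w))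
    (i j k : n) : S k k * S i j = S i k * S j k := by
  have hsingle (i : n) : 0 ≤ (Pi.single i 1 : n → R) := Pi.single_nonneg.mpr zero_le_one
  have hik := h _ _ (hsingle i) (hsingle k)
  have hjk := h _ _ (hsingle j) (hsingle k)
  have hijk := h _ _ (add_nonneg (hsingle i) (hsingle j)) (hsingle k)
  simp only [mulVec_add, mulVec_single_one, dotProduct_add, add_dotProduct, single_dotProduct,
    one_mul, col_apply] at hik hjk hijk
  refine mul_left_cancel₀ (two_ne_zero (α := R)) ?_
  linear_combination hik + hjk - hijk - S k k * hS.apply i j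

theorem det_eq_zero_of_diag_mul_eq [IsDomain R] [DecidableEq n] [Nontrivial n]
    (h : ∀ i j k, S k k * S i j = S i k * S j k) : S.det = 0 := by
  by_cases hdiag : ∃ k, S k k ≠ 0
  · obtain ⟨k, hk⟩ := hdiag
    have hrank_one : S k k • S = vecMulVec (fun i => S i k) (fun j => S j k) := by
      ext i j; exact h i j k
    have := congrArg det hrank_one
    rw [det_smul, det_vecMulVec] at this
    exact (mul_eq_zero.mp this).resolve_left (pow_ne_zero _ hk)
  · push Not at hdiag
    have : S = 0 := by
      ext i k
      simpa [hdiag k] using (h i i k).symm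
    rw [this, det_zero]

end CommRing

theorem IsSymm.sq_dotProduct_mulVec_eq_of_isSquare {S : Matrix n n ℤ} (hS : S.IsSymm)
    (hsq : ∀ x : n → ℤ, 0 ≤ x → IsSquare (x ⬝ᵥ S *ᵥ x)) {v w : n → ℤ} (hv : 0 ≤ v) (hw : 0 ≤ w) :
    (v ⬝ᵥ S *ᵥ w) ^ 2 = (v ⬝ᵥ S *ᵥ v) * (w ⬝ᵥ S *ᵥ w) := by
  have hline (t : ℕ) := hS.dotProduct_mulVec_smul_add (t : ℤ) v w ▸
    hsq _ (add_nonneg (smul_nonneg t.cast_nonneg hv) hw)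
  have := Int.discrim_eq_zero_of_forall_isSquare (hsq v hv) hline
  rw [discrim] at this
  refine mul_left_cancel₀ (four_ne_zero (α := ℤ)) ?_
  linear_combination this

end Matrix

/-- from Lemma 4.1 of the paper: a nondegenerate symmetric integer quadratic form
in `ρ ≥ 2` variables takes some value at a tuple of non-negative integers that is not a perfect
square. -/
theorem exists_nonsquare_value (ρ : ℕ) (hρ : 2 ≤ ρ)
    (S : Matrix (Fin ρ) (Fin ρ) ℤ) (hS : S.IsSymm) (hdet : S.det ≠ 0) :
    ∃ x : Fin ρ → ℕ,
      ¬ IsSquare ((fun i => (x i : ℤ)) ⬝ᵥ (S *ᵥ fun i => (x i : ℤ))) := by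
  by_contra! hcon
  have hsq (x : Fin ρ → ℤ) (hx : 0 ≤ x) : IsSquare (x ⬝ᵥ S *ᵥ x) := by
    have hx_cast : (fun i => ((x i).toNat : ℤ)) = x := funext fun i => Int.toNat_of_nonneg (hx i)
    simpa only [hx_cast] using hcon fun i => (x i).toNat
  have : Nontrivial (Fin ρ) := Fin.nontrivial_iff_two_le.mpr hρ
  exact hdet <| det_eq_zero_of_diag_mul_eq <|
    hS.diag_mul_eq_of_sq_dotProduct_mulVec fun _ _ => hS.sq_dotProduct_mulVec_eq_of_isSquare hsq
end

section
/- Let n ≥ 1, let p₀ ∈ ℝ and p ∈ ℝⁿ with ‖p‖ < p₀, and set d = p₀² − ‖p‖² (so d > 0). Let k > 0 be real and let ℓ = √(1 + d·k²) (so ℓ² − d·k² = 1 and ℓ > 0). Then the Lebesgue measure of the set E = {r ∈ ℝⁿ : k²·(p₀ + ⟨p, r⟩)² < ℓ²·(1 − ‖r‖²)} equals ω_n · ℓ / (1 + p₀²k²)^{(n+1)/2}, where ω_n is the Lebesgue measure of the closed unit ball in ℝⁿ. -/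
open scoped RealInnerProductSpace

/-!
Write `a = 1 + p₀²k²`; the Pell relation gives `a = ℓ² + k²‖p‖²`. Completing the square, the
domain is the preimage of the ellipsoid `‖y‖² + (k/ℓ)²⟪p, y⟫² < 1` under the affine map
`r ↦ √a (r + (k²p₀/a) p)`. That ellipsoid is the image of the unit ball under the rank-one
perturbation of the identity contracting the direction of `p` by `ℓ/√a`, so its volume is
`ω_n ℓ/√a`; the translation does not change volume and the dilation by `√a` divides it by `a^(n/2)`.
-/

open MeasureTheory Metric

theorem LinearMap.det_id_add_smulRight {R M : Type*} [CommRing R] [AddCommGroup M] [Module R M]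
    [Module.Free R M] [Module.Finite R M] (f : M →ₗ[R] R) (v : M) :
    LinearMap.det (LinearMap.id + f.smulRight v) = 1 + f v := by
  set b := Module.Free.chooseBasis R M
  have hM : LinearMap.toMatrix b b (LinearMap.id + f.smulRight v)
      = 1 + Matrix.replicateCol Unit (b.repr v) * Matrix.replicateRow Unit (f ∘ b) := by
    ext i j
    simp [LinearMap.toMatrix_apply, Matrix.one_apply, Finsupp.single_apply, eq_comm,
      Matrix.mul_apply, mul_comm]
  rw [← LinearMap.det_toMatrix b, hM, Matrix.det_one_add_replicateCol_mul_replicateRow]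
  conv_rhs => rw [← b.sum_repr v]
  simp only [dotProduct, Function.comp_apply, map_sum, map_smul, smul_eq_mul, mul_comm]

section InnerProductSpace

variable {E : Type*} [NormedAddCommGroup E] [InnerProductSpace ℝ E]

theorem setOf_lt_one_eq_image_ball [FiniteDimensional ℝ E] {q : E → ℝ} {T : E →ₗ[ℝ] E}
    (hT : ∀ y, q (T y) = ‖y‖ ^ 2) : {y | q y < 1} = T '' ball 0 1 := by
  have hT_surj : Function.Surjective T := by
    refine LinearMap.injective_iff_surjective.mp ((injective_iff_map_eq_zero T).mpr fun y hy => ?_)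
    have h := hT y
    rw [hy, ← T.map_zero, hT] at h
    simpa using h.symm
  ext y
  constructor
  · intro hy
    obtain ⟨z, rfl⟩ := hT_surj y
    rw [Set.mem_ofPred_eq, hT, sq_lt_one_iff₀ (norm_nonneg z)] at hy
    exact ⟨z, mem_ball_zero_iff.mpr hy, rfl⟩
  · rintro ⟨z, hz, rfl⟩
    rw [Set.mem_ofPred_eq, hT, sq_lt_one_iff₀ (norm_nonneg z)]
    exact mem_ball_zero_iff.mp hz

def rankOneEllipsoid (p : E) (t : ℝ) : Set E := {y | ‖y‖ ^ 2 + t * ⟪p, y⟫ ^ 2 < 1}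

theorem norm_sq_add_mul_inner_sq_rankOne (p y : E) {t c : ℝ}
    (hc : c * (2 + c * ‖p‖ ^ 2) + t * (1 + c * ‖p‖ ^ 2) ^ 2 = 0) :
    ‖y + (c * ⟪p, y⟫) • p‖ ^ 2 + t * ⟪p, y + (c * ⟪p, y⟫) • p⟫ ^ 2 = ‖y‖ ^ 2 := by
  rw [norm_add_sq_real, inner_add_right, real_inner_smul_right, real_inner_smul_right, norm_smul,
    real_inner_self_eq_norm_sq, Real.norm_eq_abs, mul_pow, sq_abs, real_inner_comm p y]
  linear_combination (⟪p, y⟫ ^ 2) * hc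

theorem addHaar_rankOneEllipsoid [FiniteDimensional ℝ E] [MeasurableSpace E] [BorelSpace E]
    (μ : Measure E) [μ.IsAddHaarMeasure] (p : E) {t : ℝ} (ht : 0 < 1 + t * ‖p‖ ^ 2) :
    μ (rankOneEllipsoid p t) = ENNReal.ofReal (√(1 + t * ‖p‖ ^ 2))⁻¹ * μ (ball 0 1) := by
  generalize hγ_def : (√(1 + t * ‖p‖ ^ 2))⁻¹ = γ
  have hγ_pos : 0 < γ := hγ_def ▸ inv_pos.mpr (Real.sqrt_pos.mpr ht)
  have hγ_sq : γ ^ 2 * (1 + t * ‖p‖ ^ 2) = 1 := by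
    rw [← hγ_def, inv_pow, Real.sq_sqrt ht.le, inv_mul_cancel₀ ht.ne']
  -- `c` is chosen so that `1 + c‖p‖² = γ` without dividing by `‖p‖²`, so `p = 0` is no special case
  obtain ⟨c, hc, hc_norm⟩ : ∃ c : ℝ, c * (1 + γ) = -(t * γ ^ 2) ∧ c * ‖p‖ ^ 2 = γ - 1 :=
    ⟨-(t * γ ^ 2) / (1 + γ), by field_simp, by field_simp; linear_combination -hγ_sq⟩
  let T : E →ₗ[ℝ] E := LinearMap.id + (c • innerₛₗ ℝ p).smulRight p
  have hT : ∀ y, ‖T y‖ ^ 2 + t * ⟪p, T y⟫ ^ 2 = ‖y‖ ^ 2 := fun y =>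
    norm_sq_add_mul_inner_sq_rankOne p y (by rw [hc_norm]; linear_combination hc)
  rw [rankOneEllipsoid, setOf_lt_one_eq_image_ball (q := fun y => ‖y‖ ^ 2 + t * ⟪p, y⟫ ^ 2) hT,
    Measure.addHaar_image_linearMap, LinearMap.det_id_add_smulRight]
  simp [hc_norm, abs_of_pos hγ_pos]

def submaximalityDomain (p₀ : ℝ) (p : E) (k ℓ : ℝ) : Set E :=
  {r | k ^ 2 * (p₀ + ⟪p, r⟫) ^ 2 < ℓ ^ 2 * (1 - ‖r‖ ^ 2)}

variable {p₀ k ℓ : ℝ} {p : E}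

theorem submaximalityDomain_eq_preimage_rankOneEllipsoid (hℓ : 0 < ℓ)
    (hℓ_sq : ℓ ^ 2 = 1 + (p₀ ^ 2 - ‖p‖ ^ 2) * k ^ 2) :
    submaximalityDomain p₀ p k ℓ =
      (· + (k ^ 2 * p₀ / (1 + p₀ ^ 2 * k ^ 2)) • p) ⁻¹'
        ((√(1 + p₀ ^ 2 * k ^ 2) • ·) ⁻¹' rankOneEllipsoid p ((k / ℓ) ^ 2)) := by
  have ha : 0 < 1 + p₀ ^ 2 * k ^ 2 := by positivity
  generalize hs : √(1 + p₀ ^ 2 * k ^ 2) = s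
  generalize hw_def : k ^ 2 * p₀ / (1 + p₀ ^ 2 * k ^ 2) = w
  have hs_sq : s ^ 2 = 1 + p₀ ^ 2 * k ^ 2 := by rw [← hs, Real.sq_sqrt ha.le]
  have hw : (1 + p₀ ^ 2 * k ^ 2) * w = k ^ 2 * p₀ := by rw [← hw_def]; field_simp
  have hkℓ : (k / ℓ) ^ 2 * ℓ ^ 2 = k ^ 2 := by field_simp
  ext r
  have hnorm : ‖s • (r + w • p)‖ ^ 2 = s ^ 2 * (‖r‖ ^ 2 + 2 * w * ⟪p, r⟫ + w ^ 2 * ‖p‖ ^ 2) := by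
    rw [norm_smul, mul_pow, Real.norm_eq_abs, sq_abs, norm_add_sq_real, real_inner_smul_right,
      norm_smul, mul_pow, Real.norm_eq_abs, sq_abs, real_inner_comm]
    ring
  have hinner : ⟪p, s • (r + w • p)⟫ = s * (⟪p, r⟫ + w * ‖p‖ ^ 2) := by
    rw [real_inner_smul_right, inner_add_right, real_inner_smul_right, real_inner_self_eq_norm_sq]
  have key : ℓ ^ 2 * (‖s • (r + w • p)‖ ^ 2 + (k / ℓ) ^ 2 * ⟪p, s • (r + w • p)⟫ ^ 2 - 1)
      = (1 + p₀ ^ 2 * k ^ 2) * (k ^ 2 * (p₀ + ⟪p, r⟫) ^ 2 - ℓ ^ 2 * (1 - ‖r‖ ^ 2)) := by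
    rw [hnorm, hinner]
    linear_combination (s ^ 2 * (⟪p, r⟫ + w * ‖p‖ ^ 2) ^ 2) * hkℓ
      + (ℓ ^ 2 * (‖r‖ ^ 2 + 2 * w * ⟪p, r⟫ + w ^ 2 * ‖p‖ ^ 2)
          + k ^ 2 * (⟪p, r⟫ + w * ‖p‖ ^ 2) ^ 2) * hs_sq
      + (2 * (1 + p₀ ^ 2 * k ^ 2) * ⟪p, r⟫
          + ‖p‖ ^ 2 * ((1 + p₀ ^ 2 * k ^ 2) * w + k ^ 2 * p₀)) * hw
      + ((1 + p₀ ^ 2 * k ^ 2) * (2 * w * ⟪p, r⟫ + w ^ 2 * ‖p‖ ^ 2) + p₀ ^ 2 * k ^ 2) * hℓ_sq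
  simp only [submaximalityDomain, Set.mem_preimage, rankOneEllipsoid, Set.mem_ofPred_eq]
  rw [← sub_neg, ← sub_neg (b := (1 : ℝ)), ← mul_lt_mul_iff_right₀ ha, mul_zero, ← key]
  exact smul_neg_iff_of_pos_left (pow_pos hℓ 2)

theorem addHaar_submaximalityDomain [FiniteDimensional ℝ E] [MeasurableSpace E] [BorelSpace E]
    (μ : Measure E) [μ.IsAddHaarMeasure] (hℓ : 0 < ℓ)
    (hℓ_sq : ℓ ^ 2 = 1 + (p₀ ^ 2 - ‖p‖ ^ 2) * k ^ 2) :
    μ (submaximalityDomain p₀ p k ℓ) = ENNReal.ofReal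
      (ℓ / (1 + p₀ ^ 2 * k ^ 2) ^ (((Module.finrank ℝ E : ℝ) + 1) / 2)) * μ (ball 0 1) := by
  have ha : 0 < 1 + p₀ ^ 2 * k ^ 2 := by positivity
  have hs : 0 < √(1 + p₀ ^ 2 * k ^ 2) := Real.sqrt_pos.mpr ha
  rw [submaximalityDomain_eq_preimage_rankOneEllipsoid hℓ hℓ_sq, measure_preimage_add_right,
    Measure.addHaar_preimage_smul _ hs.ne', addHaar_rankOneEllipsoid _ _ (by positivity),
    ← mul_assoc, ← ENNReal.ofReal_mul (by positivity)]
  have h_ellipsoid : 1 + (k / ℓ) ^ 2 * ‖p‖ ^ 2 = (1 + p₀ ^ 2 * k ^ 2) / ℓ ^ 2 := by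
    field_simp
    linear_combination hℓ_sq
  have h_rpow : (1 + p₀ ^ 2 * k ^ 2) ^ (((Module.finrank ℝ E : ℝ) + 1) / 2)
      = √(1 + p₀ ^ 2 * k ^ 2) ^ (Module.finrank ℝ E + 1) := by
    rw [Real.sqrt_eq_rpow, ← Real.rpow_mul_natCast ha.le]
    push_cast
    ring_nf
  rw [h_ellipsoid, Real.sqrt_div' _ (sq_nonneg ℓ), Real.sqrt_sq hℓ.le, abs_of_pos (by positivity),
    h_rpow]
  congr 2
  field_simp
  ring

end InnerProductSpace

theorem volume_submaximality_domain_general (n : ℕ)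
    (p₀ : ℝ) (p : EuclideanSpace ℝ (Fin n)) (hp : ‖p‖ < p₀)
    (k : ℝ) (ℓ : ℝ) (hℓ : ℓ = Real.sqrt (1 + (p₀ ^ 2 - ‖p‖ ^ 2) * k ^ 2)) :
    MeasureTheory.volume
        {r : EuclideanSpace ℝ (Fin n) | k ^ 2 * (p₀ + ⟪p, r⟫) ^ 2 < ℓ ^ 2 * (1 - ‖r‖ ^ 2)}
      = ENNReal.ofReal
        ((MeasureTheory.volume (Metric.closedBall (0 : EuclideanSpace ℝ (Fin n)) 1)).toReal
          * ℓ / (1 + p₀ ^ 2 * k ^ 2) ^ (((n : ℝ) + 1) / 2)) := by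
  have hd : 0 < 1 + (p₀ ^ 2 - ‖p‖ ^ 2) * k ^ 2 :=
    add_pos_of_pos_of_nonneg one_pos
      (mul_nonneg (sub_nonneg.mpr (pow_le_pow_left₀ (norm_nonneg p) hp.le 2)) (sq_nonneg k))
  have hℓ_pos : 0 < ℓ := hℓ ▸ Real.sqrt_pos.mpr hd
  have hℓ_sq : ℓ ^ 2 = 1 + (p₀ ^ 2 - ‖p‖ ^ 2) * k ^ 2 := hℓ ▸ Real.sq_sqrt hd.le
  change volume (submaximalityDomain p₀ p k ℓ) = _
  rw [addHaar_submaximalityDomain volume hℓ_pos hℓ_sq, finrank_euclideanSpace_fin,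
    ← Measure.addHaar_unitClosedBall_eq_addHaar_unitBall, mul_comm, mul_div_assoc,
    ENNReal.ofReal_mul ENNReal.toReal_nonneg, ENNReal.ofReal_toReal measure_closedBall_lt_top.ne]

/-- exact volume computation in Proposition 3.2 of the paper: the Lebesgue measure
of the submaximality domain `E = {r : k²(p₀ + ⟨p,r⟩)² < ℓ²(1 − ‖r‖²)}` equals
`ω_n · ℓ / (1 + p₀²k²)^((n+1)/2)`, where `ω_n` is the volume of the closed unit ball in `ℝⁿ`. -/
theorem volume_submaximality_domain (n : ℕ) (hn : 1 ≤ n)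
    (p₀ : ℝ) (p : EuclideanSpace ℝ (Fin n)) (hp : ‖p‖ < p₀)
    (k : ℝ) (hk : 0 < k) (ℓ : ℝ) (hℓ : ℓ = Real.sqrt (1 + (p₀ ^ 2 - ‖p‖ ^ 2) * k ^ 2)) :
    MeasureTheory.volume
        {r : EuclideanSpace ℝ (Fin n) | k ^ 2 * (p₀ + ⟪p, r⟫) ^ 2 < ℓ ^ 2 * (1 - ‖r‖ ^ 2)}
      = ENNReal.ofReal
        ((MeasureTheory.volume (Metric.closedBall (0 : EuclideanSpace ℝ (Fin n)) 1)).toReal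
          * ℓ / (1 + p₀ ^ 2 * k ^ 2) ^ (((n : ℝ) + 1) / 2)) :=
  volume_submaximality_domain_general n p₀ p hp k ℓ hℓ
end

section
/- Let n ≥ 1, let p₀ ∈ ℝ and p ∈ ℝⁿ with ‖p‖ < p₀, set d = p₀² − ‖p‖², let k ≥ 1 be real and ℓ = √(1 + d·k²). Then the Lebesgue measure of the set E = {r ∈ ℝⁿ : k²·(p₀ + ⟨p, r⟩)² < ℓ²·(1 − ‖r‖²)} is strictly less than ω_n / p₀ⁿ, where ω_n is the Lebesgue measure of the closed unit ball in ℝⁿ. -/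
open scoped RealInnerProductSpace ENNReal
open Module MeasureTheory Metric

/-!
Write `p = ‖p‖ • e` with `e` a unit vector and put `β = √(1 + k²p₀²)`. Completing the square in
`⟪e, r⟫`, using `ℓ² = 1 + (p₀² - ‖p‖²)k²`, shows that `E` is the preimage of an open unit ball
under the linear map scaling by `β²/ℓ` along `e` and by `β` on `e`'s orthogonal complement. That
map has determinant `β^(n+1)/ℓ`, so `vol E = ω_n ℓ / β^(n+1)`, and `p₀ⁿ ℓ < β^(n+1)` because
`p₀ < β` (as `k ≥ 1`) and `ℓ ≤ β`.
-/

theorem LinearMap.det_eq_prod_of_apply_basis_eq_smul {R M ι : Type*} [CommRing R]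
    [AddCommGroup M] [Module R M] [Fintype ι] [DecidableEq ι] (b : Basis ι R M) {f : M →ₗ[R] M}
    {d : ι → R} (h : ∀ i, f (b i) = d i • b i) : LinearMap.det f = ∏ i, d i := by
  have hf : LinearMap.toMatrix b b f = Matrix.diagonal d := by
    ext i j
    rw [LinearMap.toMatrix_apply, h, map_smul, b.repr_self]
    rcases eq_or_ne i j with rfl | hij
    · simp
    · simp [hij]
  rw [← LinearMap.det_toMatrix b, hf, Matrix.det_diagonal]

theorem OrthonormalBasis.exists_apply_eq {𝕜 E ι : Type*} [RCLike 𝕜] [NormedAddCommGroup E]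
    [InnerProductSpace 𝕜 E] [FiniteDimensional 𝕜 E] [Fintype ι]
    (hcard : finrank 𝕜 E = Fintype.card ι) {e : E} (he : ‖e‖ = 1) (i : ι) :
    ∃ b : OrthonormalBasis ι 𝕜 E, b i = e := by
  obtain ⟨b, hb⟩ := Orthonormal.exists_orthonormalBasis_extension_of_card_eq
    (v := fun _ => e) (s := {i}) hcard (by simp [he])
  exact ⟨b, hb i rfl⟩

theorem exists_norm_eq_one_and_norm_smul_eq {E : Type*} [NormedAddCommGroup E] [NormedSpace ℝ E]
    [Nontrivial E] (x : E) : ∃ e : E, ‖e‖ = 1 ∧ ‖x‖ • e = x := by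
  rcases eq_or_ne x 0 with rfl | hx
  · obtain ⟨e, he⟩ := exists_norm_eq E zero_le_one
    exact ⟨e, he, by simp⟩
  · exact ⟨‖x‖⁻¹ • x, norm_smul_inv_norm hx, smul_inv_smul₀ (norm_ne_zero_iff.2 hx) x⟩

theorem ENNReal.ofReal_inv_mul_lt_ofReal_toReal_div {a : ℝ≥0∞} (ha₀ : a ≠ 0) (ha : a ≠ ⊤)
    {c d : ℝ} (hc : 0 < c) (hcd : c < d) :
    ENNReal.ofReal d⁻¹ * a < ENNReal.ofReal (a.toReal / c) := by
  conv_lhs => rw [← ENNReal.ofReal_toReal ha]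
  have ha' : 0 < a.toReal := ENNReal.toReal_pos ha₀ ha
  rw [← ENNReal.ofReal_mul (inv_nonneg.2 (hc.trans hcd).le),
    ENNReal.ofReal_lt_ofReal_iff (div_pos ha' hc), inv_mul_eq_div]
  exact div_lt_div_of_pos_left ha' hc hcd

theorem pow_lt_sq_div_mul_pow_pred {p₀ β ℓ : ℝ} {n : ℕ} (hn : n ≠ 0) (hp₀ : 0 ≤ p₀)
    (hp₀β : p₀ < β) (hℓ : 0 < ℓ) (hℓβ : ℓ ≤ β) : p₀ ^ n < β ^ 2 / ℓ * β ^ (n - 1) := by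
  obtain ⟨m, rfl⟩ := Nat.exists_eq_succ_of_ne_zero hn
  calc p₀ ^ (m + 1) < β ^ (m + 1) := pow_lt_pow_left₀ hp₀β hp₀ hn
    _ ≤ β ^ (m + 1) * (β / ℓ) :=
      le_mul_of_one_le_right (by positivity [hp₀.trans_lt hp₀β]) ((one_le_div hℓ).2 hℓβ)
    _ = β ^ 2 / ℓ * β ^ (m + 1 - 1) := by rw [Nat.add_sub_cancel]; ring

section AxialScaling

variable {E : Type*} [NormedAddCommGroup E] [InnerProductSpace ℝ E]

/-- For a unit vector `e`: multiplication by `α` on `ℝ ∙ e` and by `β` on `(ℝ ∙ e)ᗮ`. -/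
noncomputable def axialScaling (e : E) (α β : ℝ) : E →ₗ[ℝ] E :=
  β • LinearMap.id + (α - β) • (innerₛₗ ℝ e).smulRight e

theorem axialScaling_apply (e : E) (α β : ℝ) (x : E) :
    axialScaling e α β x = β • x + ((α - β) * ⟪e, x⟫) • e := by
  simp [axialScaling, mul_smul]

variable {e : E} {α β : ℝ}

theorem axialScaling_apply_self (he : ‖e‖ = 1) : axialScaling e α β e = α • e := by
  rw [axialScaling_apply, real_inner_self_eq_norm_sq, he, ← add_smul]
  ring_nf

theorem norm_sq_axialScaling_add_smul (he : ‖e‖ = 1) (t : ℝ) (x : E) :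
    ‖axialScaling e α β x + t • e‖ ^ 2 =
      β ^ 2 * ‖x‖ ^ 2 + (α ^ 2 - β ^ 2) * ⟪e, x⟫ ^ 2 + 2 * α * t * ⟪e, x⟫ + t ^ 2 := by
  rw [axialScaling_apply, add_assoc, ← add_smul, norm_add_sq_real, norm_smul, norm_smul,
    inner_smul_left, inner_smul_right, real_inner_comm, he]
  simp only [Real.norm_eq_abs, mul_pow, sq_abs, conj_trivial]
  ring

theorem det_axialScaling [FiniteDimensional ℝ E] (he : ‖e‖ = 1) :
    LinearMap.det (axialScaling e α β) = α * β ^ (finrank ℝ E - 1) := by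
  have : Nontrivial E := ⟨e, 0, fun h => by simp [h] at he⟩
  obtain ⟨m, hm⟩ := Nat.exists_eq_succ_of_ne_zero (finrank_pos (R := ℝ) (M := E)).ne'
  obtain ⟨b, hb⟩ := OrthonormalBasis.exists_apply_eq (hm.trans (Fintype.card_fin _).symm) he 0
  have hdiag : ∀ i, axialScaling e α β (b.toBasis i) =
      (Fin.cons α fun _ => β : Fin (m + 1) → ℝ) i • b.toBasis i := by
    intro i
    rw [OrthonormalBasis.coe_toBasis]
    refine Fin.cases ?_ (fun j => ?_) i
    · rw [hb, Fin.cons_zero, axialScaling_apply_self he]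
    · rw [Fin.cons_succ, axialScaling_apply, ← hb, b.orthonormal.2 (Fin.succ_ne_zero j).symm,
        mul_zero, zero_smul, add_zero]
  rw [LinearMap.det_eq_prod_of_apply_basis_eq_smul b.toBasis hdiag, Fin.prod_univ_succ, hm]
  simp

theorem addHaar_preimage_axialScaling_ball [FiniteDimensional ℝ E] [MeasurableSpace E]
    [BorelSpace E] (he : ‖e‖ = 1) (μ : Measure E) [μ.IsAddHaarMeasure] (hα : 0 < α)
    (hβ : 0 < β) (c : E) (r : ℝ) :
    μ (axialScaling e α β ⁻¹' ball c r) =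
      ENNReal.ofReal (α * β ^ (finrank ℝ E - 1))⁻¹ * μ (ball 0 r) := by
  have hdet := det_axialScaling he (α := α) (β := β)
  have hpos : 0 < α * β ^ (finrank ℝ E - 1) := by positivity
  rw [Measure.addHaar_preimage_linearMap μ (hdet ▸ hpos.ne'), hdet,
    abs_of_pos (inv_pos.2 hpos), Measure.addHaar_ball_center]

theorem submaximal_iff_norm_axialScaling_add_smul_lt_one (he : ‖e‖ = 1) {p₀ s k ℓ : ℝ}
    (hℓ : 0 < ℓ) (hℓsq : ℓ ^ 2 = 1 + (p₀ ^ 2 - s ^ 2) * k ^ 2)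
    (hβsq : β ^ 2 = 1 + k ^ 2 * p₀ ^ 2) (x : E) :
    k ^ 2 * (p₀ + s * ⟪e, x⟫) ^ 2 < ℓ ^ 2 * (1 - ‖x‖ ^ 2) ↔
      ‖axialScaling e (β ^ 2 / ℓ) β x + (k ^ 2 * p₀ * s / ℓ) • e‖ < 1 := by
  rw [← sq_lt_one_iff₀ (norm_nonneg _), norm_sq_axialScaling_add_smul he, ← sub_neg,
    ← sub_neg (b := 1)]
  set y := ⟪e, x⟫
  set α := β ^ 2 / ℓ
  set t := k ^ 2 * p₀ * s / ℓ
  have hα : α * ℓ = β ^ 2 := div_mul_cancel₀ _ hℓ.ne'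
  have ht : t * ℓ = k ^ 2 * p₀ * s := div_mul_cancel₀ _ hℓ.ne'
  have key : ℓ ^ 2 * (β ^ 2 * ‖x‖ ^ 2 + (α ^ 2 - β ^ 2) * y ^ 2 + 2 * α * t * y + t ^ 2 - 1)
      = β ^ 2 * (k ^ 2 * (p₀ + s * y) ^ 2 - ℓ ^ 2 * (1 - ‖x‖ ^ 2)) := by
    linear_combination (y ^ 2 * (α * ℓ + β ^ 2) + 2 * y * t * ℓ) * hα
      + (2 * y * β ^ 2 + t * ℓ + k ^ 2 * p₀ * s) * ht
      + (β ^ 2 * y ^ 2 + ℓ ^ 2 - k ^ 2 * p₀ ^ 2) * hβsq + (k ^ 2 * p₀ ^ 2 - β ^ 2 * y ^ 2) * hℓsq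
  have hβ : 0 < β ^ 2 := hβsq ▸ by positivity
  constructor <;> intro h <;> nlinarith [pow_pos hℓ 2]

end AxialScaling

/-- Proposition 3.2 of the paper: the Lebesgue measure of the submaximality domain
`E = {r : k²(p₀ + ⟨p,r⟩)² < ℓ²(1 − ‖r‖²)}` is strictly less than `ω_n / p₀ⁿ`, where `ω_n` is the
volume of the closed unit ball in `ℝⁿ`. -/
theorem volume_submaximality_domain_lt (n : ℕ) (hn : 1 ≤ n)
    (p₀ : ℝ) (p : EuclideanSpace ℝ (Fin n)) (hp : ‖p‖ < p₀)
    (k : ℝ) (hk : 1 ≤ k) (ℓ : ℝ) (hℓ : ℓ = Real.sqrt (1 + (p₀ ^ 2 - ‖p‖ ^ 2) * k ^ 2)) :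
    MeasureTheory.volume
        {r : EuclideanSpace ℝ (Fin n) | k ^ 2 * (p₀ + ⟪p, r⟫) ^ 2 < ℓ ^ 2 * (1 - ‖r‖ ^ 2)}
      < ENNReal.ofReal
        ((MeasureTheory.volume (Metric.closedBall (0 : EuclideanSpace ℝ (Fin n)) 1)).toReal
          / p₀ ^ n) := by
  have : NeZero n := ⟨by omega⟩
  have hp₀ : 0 < p₀ := (norm_nonneg p).trans_lt hp
  have hℓarg : 0 < 1 + (p₀ ^ 2 - ‖p‖ ^ 2) * k ^ 2 :=
    add_pos_of_pos_of_nonneg one_pos <| mul_nonneg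
      (sub_nonneg.2 (pow_le_pow_left₀ (norm_nonneg p) hp.le 2)) (sq_nonneg k)
  obtain ⟨hℓ₀, hℓsq⟩ : 0 < ℓ ∧ ℓ ^ 2 = 1 + (p₀ ^ 2 - ‖p‖ ^ 2) * k ^ 2 :=
    hℓ ▸ ⟨Real.sqrt_pos.2 hℓarg, Real.sq_sqrt hℓarg.le⟩
  set β := √(1 + k ^ 2 * p₀ ^ 2)
  have hβsq : β ^ 2 = 1 + k ^ 2 * p₀ ^ 2 := Real.sq_sqrt (by positivity)
  have hβ₀ : 0 < β := Real.sqrt_pos.2 (by positivity)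
  obtain ⟨e, he, hpe⟩ := exists_norm_eq_one_and_norm_smul_eq p
  have hset : {r : EuclideanSpace ℝ (Fin n) | k ^ 2 * (p₀ + ⟪p, r⟫) ^ 2 < ℓ ^ 2 * (1 - ‖r‖ ^ 2)}
      = axialScaling e (β ^ 2 / ℓ) β ⁻¹' ball (-((k ^ 2 * p₀ * ‖p‖ / ℓ) • e)) 1 := by
    ext r
    rw [Set.mem_preimage, mem_ball, dist_eq_norm, sub_neg_eq_add, Set.mem_ofPred_eq,
      ← submaximal_iff_norm_axialScaling_add_smul_lt_one he hℓ₀ hℓsq hβsq, ← real_inner_smul_left,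
      hpe]
  have hkey : p₀ ^ n < β ^ 2 / ℓ * β ^ (n - 1) :=
    pow_lt_sq_div_mul_pow_pred (by omega) hp₀.le
      (Real.lt_sqrt hp₀.le |>.2 (by nlinarith [one_le_pow₀ (n := 2) hk])) hℓ₀
      (hℓ ▸ Real.sqrt_le_sqrt (by nlinarith [sq_nonneg (k * ‖p‖)]))
  rw [hset, addHaar_preimage_axialScaling_ball he volume (by positivity) hβ₀,
    ← Measure.addHaar_closedBall_eq_addHaar_ball, finrank_euclideanSpace_fin]
  exact ENNReal.ofReal_inv_mul_lt_ofReal_toReal_div (measure_closedBall_pos _ _ one_pos).ne'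
    measure_closedBall_lt_top.ne (pow_pos hp₀ n) hkey
end

section
/- Let n ≥ 1 and ζ > 0. Then the set of vectors (p₀, p) ∈ ℤ × ℤⁿ such that p₀ ≥ 1, ‖p‖² < p₀², and there exist integers k ≥ 1 and ℓ ≥ 1 with ℓ² − (p₀² − ‖p‖²)·k² = 1 for which the Lebesgue measure of E = {r ∈ ℝⁿ : k²·(p₀ + ⟨p, r⟩)² < ℓ²·(1 − ‖r‖²)} is at least ζ, is a finite set. -/
/-!
Completing the square with the Pell relation `ℓ² - (p₀² - ‖p‖²) k² = 1` rewrites the domain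
`k² (p₀ + ⟪p, r⟫)² < ℓ² (1 - ‖r‖²)` as the ellipsoid `ℓ² ‖r - c‖² + k² ⟪p, r - c⟫² < ℓ² / M`,
where `M = ℓ² + k² ‖p‖²` and `c = -(k² p₀ / M) p`. Hence it lies in the ball of radius `M^(-1/2) ≤ 1`
about `c`, whose volume is at most `M^(-1/2)` times that of the unit ball. A lower bound `ζ` on the
volume therefore bounds `M`, and `M` dominates both `p₀²` and `‖p‖²`: only finitely many integer
vectors `(p₀, p)` remain.
-/

open MeasureTheory Metric Module
open scoped RealInnerProductSpace

section Ellipsoid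

variable {F : Type*} [NormedAddCommGroup F] [InnerProductSpace ℝ F]

theorem pell_ellipsoid_identity (p r : F) {p₀ k ℓ : ℝ} (hM : ℓ ^ 2 + k ^ 2 * ‖p‖ ^ 2 ≠ 0)
    (hpell : ℓ ^ 2 - (p₀ ^ 2 - ‖p‖ ^ 2) * k ^ 2 = 1) :
    ℓ ^ 2 * ‖r - -(k ^ 2 * p₀ / (ℓ ^ 2 + k ^ 2 * ‖p‖ ^ 2)) • p‖ ^ 2
        + k ^ 2 * ⟪p, r - -(k ^ 2 * p₀ / (ℓ ^ 2 + k ^ 2 * ‖p‖ ^ 2)) • p⟫ ^ 2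
      = k ^ 2 * (p₀ + ⟪p, r⟫) ^ 2 - ℓ ^ 2 * (1 - ‖r‖ ^ 2)
        + ℓ ^ 2 / (ℓ ^ 2 + k ^ 2 * ‖p‖ ^ 2) := by
  rw [neg_smul, sub_neg_eq_add, norm_add_sq_real, inner_add_right, inner_smul_right, inner_smul_right,
    real_inner_self_eq_norm_sq, norm_smul, mul_pow, Real.norm_eq_abs, sq_abs, real_inner_comm r p]
  field_simp
  linear_combination (ℓ ^ 2 * (ℓ ^ 2 + k ^ 2 * ‖p‖ ^ 2)) * hpell

theorem setOf_pell_ellipsoid_subset_ball (p : F) {p₀ k ℓ : ℝ} (hℓ : ℓ ≠ 0)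
    (hpell : ℓ ^ 2 - (p₀ ^ 2 - ‖p‖ ^ 2) * k ^ 2 = 1) :
    {r : F | k ^ 2 * (p₀ + ⟪p, r⟫) ^ 2 < ℓ ^ 2 * (1 - ‖r‖ ^ 2)} ⊆
      ball (-(k ^ 2 * p₀ / (ℓ ^ 2 + k ^ 2 * ‖p‖ ^ 2)) • p) (√(ℓ ^ 2 + k ^ 2 * ‖p‖ ^ 2))⁻¹ := by
  set M := ℓ ^ 2 + k ^ 2 * ‖p‖ ^ 2
  have hℓ2 : 0 < ℓ ^ 2 := by positivity
  have hM : 0 < M := by positivity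
  intro r (hr : k ^ 2 * (p₀ + ⟪p, r⟫) ^ 2 < ℓ ^ 2 * (1 - ‖r‖ ^ 2))
  have hid := pell_ellipsoid_identity p r hM.ne' hpell
  set d := r - -(k ^ 2 * p₀ / M) • p
  have hd : ℓ ^ 2 * ‖d‖ ^ 2 < ℓ ^ 2 * (1 / M) := by
    nlinarith [mul_nonneg (sq_nonneg k) (sq_nonneg ⟪p, d⟫), mul_one_div (ℓ ^ 2) M]
  rw [mem_ball, dist_eq_norm, ← Real.sqrt_inv, ← Real.sqrt_sq (norm_nonneg d), ← one_div]
  exact Real.sqrt_lt_sqrt (sq_nonneg _) (lt_of_mul_lt_mul_left hd hℓ2.le)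

end Ellipsoid

section Volume

variable {E : Type*} [NormedAddCommGroup E] [NormedSpace ℝ E] [MeasurableSpace E] [BorelSpace E]
  [FiniteDimensional ℝ E] (μ : Measure E) [μ.IsAddHaarMeasure] (hE : 1 ≤ finrank ℝ E)
include hE

theorem measure_le_ofReal_mul_of_subset_ball {s : Set E} {x : E} {ρ : ℝ} (hρ₀ : 0 ≤ ρ)
    (hρ₁ : ρ ≤ 1) (hs : s ⊆ ball x ρ) : μ s ≤ ENNReal.ofReal ρ * μ (ball 0 1) := by
  have : Nontrivial E := Module.nontrivial_of_finrank_pos hE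
  calc μ s ≤ μ (ball x ρ) := measure_mono hs
    _ = ENNReal.ofReal (ρ ^ finrank ℝ E) * μ (ball 0 1) := μ.addHaar_ball x hρ₀
    _ ≤ ENNReal.ofReal ρ * μ (ball 0 1) := by
      gcongr
      exact pow_le_of_le_one hρ₀ hρ₁ (by omega)

theorem sqrt_le_of_ofReal_le_measure {s : Set E} {x : E} {M ζ : ℝ} (hM : 1 ≤ M)
    (hζ : 0 < ζ) (hs : s ⊆ ball x (√M)⁻¹) (hζs : ENNReal.ofReal ζ ≤ μ s) :
    √M ≤ (μ (ball 0 1)).toReal / ζ := by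
  have hsqrt : 0 < √M := Real.sqrt_pos.2 (by linarith)
  have hρ₁ : (√M)⁻¹ ≤ 1 := inv_le_one_of_one_le₀ (Real.one_le_sqrt.2 hM)
  have hle := hζs.trans (measure_le_ofReal_mul_of_subset_ball μ hE (by positivity) hρ₁ hs)
  have hζV : ζ ≤ (√M)⁻¹ * (μ (ball 0 1)).toReal := by
    have := ENNReal.toReal_mono (ENNReal.mul_ne_top ENNReal.ofReal_ne_top measure_ball_lt_top.ne) hle
    rwa [ENNReal.toReal_ofReal hζ.le, ENNReal.toReal_mul, ENNReal.toReal_ofReal (by positivity)]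
      at this
  rw [le_div_iff₀ hζ]
  calc √M * ζ ≤ √M * ((√M)⁻¹ * (μ (ball 0 1)).toReal) := by gcongr
    _ = (μ (ball 0 1)).toReal := by field_simp

end Volume

theorem sqrt_pell_le_of_ofReal_le_measure {F : Type*} [NormedAddCommGroup F]
    [InnerProductSpace ℝ F] [MeasurableSpace F] [BorelSpace F] [FiniteDimensional ℝ F]
    (μ : Measure F) [μ.IsAddHaarMeasure] (hF : 1 ≤ finrank ℝ F) (p : F) {p₀ k ℓ ζ : ℝ}
    (hℓ : 1 ≤ ℓ ^ 2) (hpell : ℓ ^ 2 - (p₀ ^ 2 - ‖p‖ ^ 2) * k ^ 2 = 1) (hζ : 0 < ζ)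
    (hζs : ENNReal.ofReal ζ ≤ μ {r : F | k ^ 2 * (p₀ + ⟪p, r⟫) ^ 2 < ℓ ^ 2 * (1 - ‖r‖ ^ 2)}) :
    √(ℓ ^ 2 + k ^ 2 * ‖p‖ ^ 2) ≤ (μ (ball 0 1)).toReal / ζ :=
  sqrt_le_of_ofReal_le_measure μ hF (by nlinarith [sq_nonneg k, sq_nonneg ‖p‖]) hζ
    (setOf_pell_ellipsoid_subset_ball p (by rintro rfl; norm_num at hℓ) hpell) hζs

theorem sq_le_of_pell {p₀ a k ℓ : ℝ} (hk : 1 ≤ k ^ 2)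
    (hpell : ℓ ^ 2 - (p₀ ^ 2 - a) * k ^ 2 = 1) : p₀ ^ 2 ≤ ℓ ^ 2 + k ^ 2 * a := by
  nlinarith [mul_nonneg (sq_nonneg p₀) (sub_nonneg.2 hk)]

/-- Corollary 3.3 of the paper: for a fixed `ζ > 0`, only finitely many integer
vectors `(p₀, p)` with `p₀ ≥ 1` and `‖p‖² < p₀²` admit a Pell solution `(ℓ, k)` of
`ℓ² − (p₀² − ‖p‖²)k² = 1` whose submaximality domain has Lebesgue measure at least `ζ`. -/
theorem finitely_many_large_submaximality_domains (n : ℕ) (hn : 1 ≤ n) (ζ : ℝ) (hζ : 0 < ζ) :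
    {v : ℤ × (Fin n → ℤ) |
      1 ≤ v.1 ∧ (∑ i, (v.2 i) ^ 2) < v.1 ^ 2 ∧
      ∃ k ℓ : ℤ, 1 ≤ k ∧ 1 ≤ ℓ ∧ ℓ ^ 2 - (v.1 ^ 2 - ∑ i, (v.2 i) ^ 2) * k ^ 2 = 1 ∧
        ENNReal.ofReal ζ ≤
          MeasureTheory.volume
            {r : EuclideanSpace ℝ (Fin n) |
              (k : ℝ) ^ 2 * ((v.1 : ℝ) + ∑ i, (v.2 i : ℝ) * r i) ^ 2
                < (ℓ : ℝ) ^ 2 * (1 - ‖r‖ ^ 2)}}.Finite := by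
  set R := (volume (ball (0 : EuclideanSpace ℝ (Fin n)) 1)).toReal / ζ
  refine ((isCompact_closedBall (0 : ℤ × (Fin n → ℤ)) R).finite_of_discrete).subset ?_
  rintro ⟨p₀, p⟩ ⟨-, -, k, ℓ, hk, hℓ, hpell, hvol⟩
  set q : EuclideanSpace ℝ (Fin n) := WithLp.toLp 2 fun i => (p i : ℝ)
  have hq : ‖q‖ ^ 2 = ∑ i, (p i : ℝ) ^ 2 := by simp [q, EuclideanSpace.norm_sq_eq]
  have hinner : ∀ r : EuclideanSpace ℝ (Fin n), ⟪q, r⟫ = ∑ i, (p i : ℝ) * r i := fun r => by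
    simp [q, PiLp.inner_apply, mul_comm]
  have hk2 : (1 : ℝ) ≤ (k : ℝ) ^ 2 := one_le_pow₀ (by exact_mod_cast hk)
  have hℓ2 : (1 : ℝ) ≤ (ℓ : ℝ) ^ 2 := one_le_pow₀ (by exact_mod_cast hℓ)
  have hpellq : (ℓ : ℝ) ^ 2 - ((p₀ : ℝ) ^ 2 - ‖q‖ ^ 2) * (k : ℝ) ^ 2 = 1 := by
    rw [hq]; exact_mod_cast hpell
  have hMR := sqrt_pell_le_of_ofReal_le_measure volume (by simp [hn]) q hℓ2 hpellq hζ
    (by simpa only [hinner] using hvol)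
  have hqM : ‖q‖ ≤ √((ℓ : ℝ) ^ 2 + (k : ℝ) ^ 2 * ‖q‖ ^ 2) :=
    Real.le_sqrt_of_sq_le (by nlinarith [sq_nonneg ‖q‖])
  have hR : 0 ≤ R := (Real.sqrt_nonneg _).trans hMR
  rw [mem_closedBall_zero_iff, norm_prod_le_iff, pi_norm_le_iff_of_nonneg hR]
  refine ⟨?_, fun i => ?_⟩
  · rw [Int.norm_eq_abs]
    exact (Real.abs_le_sqrt (sq_le_of_pell hk2 hpellq)).trans hMR
  · exact ((PiLp.norm_apply_le q i).trans hqM).trans hMR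
end

section
/- Define B : ℤ³ × ℤ³ → ℤ by B((u₁,u₂,u₃),(v₁,v₂,v₃)) = u₁v₂ + u₂v₁ + u₁v₃ + u₃v₁ + u₂v₃ + u₃v₂, and for integers α, β define n(α,β) = (β² − αβ, α² − αβ, αβ) ∈ ℤ³. Let a, b, c, d ∈ ℤ with ad − bc = 1. Then the three vectors n(a,b), n(c,d), n(a+c,b+d) form a ℤ-basis of ℤ³ (equivalently, the 3×3 integer matrix with these rows has determinant ±1), and their Gram matrix with respect to B is [[0,1,1],[1,0,1],[1,1,0]], i.e., B of each vector with itself is 0 and B of any two distinct of these vectors is 1. -/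
/-- basis claim of Example 4.6 of the paper: if `ad − bc = 1`, then the vectors
`n(a,b), n(c,d), n(a+c,b+d)` form a `ℤ`-basis of `ℤ³` (the matrix with these rows has
determinant `±1`) and their Gram matrix with respect to the intersection form `B` is
`[[0,1,1],[1,0,1],[1,1,0]]`. -/
theorem elliptic_classes_basis (B : (Fin 3 → ℤ) → (Fin 3 → ℤ) → ℤ)
    (hB : ∀ u v, B u v =
      u 0 * v 1 + u 1 * v 0 + u 0 * v 2 + u 2 * v 0 + u 1 * v 2 + u 2 * v 1)
    (nf : ℤ → ℤ → (Fin 3 → ℤ))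
    (hn : ∀ α β, nf α β = ![β ^ 2 - α * β, α ^ 2 - α * β, α * β])
    (a b c d : ℤ) (h : a * d - b * c = 1) :
    ((Matrix.of ![nf a b, nf c d, nf (a + c) (b + d)]).det = 1 ∨
      (Matrix.of ![nf a b, nf c d, nf (a + c) (b + d)]).det = -1) ∧
    (∀ i : Fin 3, B (![nf a b, nf c d, nf (a + c) (b + d)] i)
      (![nf a b, nf c d, nf (a + c) (b + d)] i) = 0) ∧
    (∀ i j : Fin 3, i ≠ j → B (![nf a b, nf c d, nf (a + c) (b + d)] i)
      (![nf a b, nf c d, nf (a + c) (b + d)] j) = 1) := by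
  refine ⟨Or.inr ?_, ?_, ?_⟩
  · simp only [hn, Matrix.det_fin_three, Matrix.of_apply, Matrix.cons_val', Matrix.cons_val_zero,
      Matrix.cons_val_one, Matrix.head_cons, Matrix.cons_val_two, Matrix.tail_cons,
      Matrix.empty_val', Matrix.cons_val_fin_one, Matrix.head_fin_const]
    linear_combination (-((a * d - b * c) ^ 2 + (a * d - b * c) + 1)) * h
  · intro i
    fin_cases i <;> simp [hB, hn] <;> ring
  · intro i j hij
    fin_cases i <;> fin_cases j <;> first
      | exact absurd rfl hij
      | (simp [hB, hn]; linear_combination ((a * d - b * c) + 1) * h)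
end
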